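/- Define erf(x) = (2/√π)·∫₀^x e^{−t²} dt, a strictly increasing bijection from ℝ onto (−1,1), and let erf⁻¹ denote its inverse. There exists a constant C > 0 such that for every integer m ≥ 1 and every θ ∈ [−1,1] the following holds. Let X_1, …, X_m be independent random variables each with law N(θ, 1); set B_i = 1 if X_i ≥ 0 and B_i = −1 otherwise; set B = (1/m)·Σ_{i=1}^m B_i; and define the estimator θ̂ = 1 if B ≥ erf(1/√2), θ̂ = −1 if B ≤ −erf(1/√2), and θ̂ = √2·erf⁻¹(B) otherwise (i.e., θ̂ is the truncation of √2·erf⁻¹(B) to the interval [−1,1]). Then E[(θ̂ − θ)²] ≤ C/m. -/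

import Mathlib

open MeasureTheory ProbabilityTheory
open scoped ENNReal NNReal Classical

/-- The Gauss error function `erf(x) = (2/√π)·∫₀^x e^{−t²} dt`. -/
noncomputable def erf (x : ℝ) : ℝ :=
  (2 / Real.sqrt Real.pi) * ∫ t in (0 : ℝ)..x, Real.exp (-t ^ 2)

/-- The inverse of the Gauss error function (on its range `(−1,1)`). -/
noncomputable def erfInv : ℝ → ℝ := Function.invFun erf

/-- The estimator: `θ̂(B) = √2·erf⁻¹(B)` truncated to `[−1, 1]`
(equivalently, truncating `B` to `[−erf(1/√2), erf(1/√2)]` before inverting). -/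
noncomputable def oneBitEstimator (B : ℝ) : ℝ :=
  if erf (1 / Real.sqrt 2) ≤ B then 1
  else if B ≤ -erf (1 / Real.sqrt 2) then -1
  else Real.sqrt 2 * erfInv B

/-! Each bit has mean `E[B_i] = erf (θ / √2)`, so the empirical mean `B` is an unbiased estimate
of `erf (θ / √2)` with variance at most `1 / m`. On `[-1/√2, 1/√2]` the integrand of `erf` is at
least `exp (-1/2)`, so `x ↦ erf (x / √2)` is invertible on `[-1, 1]` with an inverse that is
Lipschitz with constant `√(π e / 2)`; clamping `B` to the image of `[-1, 1]` only brings it closer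
to `erf (θ / √2)`. Hence `(θ̂ - θ)² ≤ (π e / 2) (B - E[B])²` pointwise, and taking expectations
gives the bound with `C = π e / 2`. -/

open Real Set

lemma abs_max_min_sub_le {α : Type*} [AddCommGroup α] [LinearOrder α] [IsOrderedAddMonoid α]
    {a b t : α} (ht : t ∈ Icc a b) (B : α) : |max a (min B b) - t| ≤ |B - t| :=
  calc |max a (min B b) - t| = |max (min B b) a - max (min t b) a| := by
        rw [max_comm, min_eq_left ht.2, max_eq_left ht.1]
    _ ≤ |min B b - min t b| := abs_max_sub_max_le_abs _ _ _
    _ ≤ |B - t| := by simpa using abs_min_sub_min_le_max B b t b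

lemma intervalIntegrable_exp_neg_sq (a b : ℝ) :
    IntervalIntegrable (fun t : ℝ ↦ exp (-t ^ 2)) volume a b :=
  (by fun_prop : Continuous fun t : ℝ ↦ exp (-t ^ 2)).intervalIntegrable a b

lemma erf_sub_erf (x y : ℝ) :
    erf y - erf x = 2 / √π * ∫ t in x..y, exp (-t ^ 2) := by
  rw [erf, erf, ← mul_sub, intervalIntegral.integral_interval_sub_left
    (intervalIntegrable_exp_neg_sq 0 y) (intervalIntegrable_exp_neg_sq 0 x)]

lemma erf_neg (x : ℝ) : erf (-x) = -erf x := by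
  have h := intervalIntegral.integral_comp_neg (a := 0) (b := x) fun t ↦ exp (-t ^ 2)
  simp only [neg_sq, neg_zero] at h
  rw [erf, erf, intervalIntegral.integral_symm, ← h, mul_neg]

lemma erf_zero : erf 0 = 0 := by simp [erf]

lemma erf_strictMono : StrictMono erf := fun x y hxy ↦ by
  rw [← sub_pos, erf_sub_erf]
  exact mul_pos (by positivity) (intervalIntegral.intervalIntegral_pos_of_pos_on
    (intervalIntegrable_exp_neg_sq x y) (fun t _ ↦ exp_pos _) hxy)

lemma continuous_erf : Continuous erf :=
  continuous_const.mul (intervalIntegral.continuous_primitive intervalIntegrable_exp_neg_sq 0)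

lemma mul_sub_le_erf_sub_erf {r x y : ℝ} (hx : -r ≤ x) (hxy : x ≤ y) (hy : y ≤ r) :
    2 / √π * exp (-r ^ 2) * (y - x) ≤ erf y - erf x := by
  have hbound : ∀ t ∈ Icc x y, exp (-r ^ 2) ≤ exp (-t ^ 2) := fun t ht ↦ by
    have : |t| ≤ |r| := abs_le_abs (by linarith [ht.2]) (by linarith [ht.1])
    exact exp_le_exp.mpr (neg_le_neg (sq_le_sq.mpr this))
  have := intervalIntegral.integral_mono_on hxy intervalIntegrable_const
    (intervalIntegrable_exp_neg_sq x y) hbound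
  rw [intervalIntegral.integral_const, smul_eq_mul] at this
  rw [erf_sub_erf, mul_assoc, mul_comm (exp _)]
  gcongr

lemma mul_abs_sub_le_abs_erf_sub {r x y : ℝ} (hx : |x| ≤ r) (hy : |y| ≤ r) :
    2 / √π * exp (-r ^ 2) * |y - x| ≤ |erf y - erf x| := by
  rcases abs_le.mp hx with ⟨hx₁, hx₂⟩
  rcases abs_le.mp hy with ⟨hy₁, hy₂⟩
  rcases le_total x y with hxy | hyx
  · rw [abs_of_nonneg (sub_nonneg.mpr hxy),
      abs_of_nonneg (sub_nonneg.mpr (erf_strictMono.monotone hxy))]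
    exact mul_sub_le_erf_sub_erf hx₁ hxy hy₂
  · rw [abs_sub_comm, abs_of_nonneg (sub_nonneg.mpr hyx), abs_sub_comm,
      abs_of_nonneg (sub_nonneg.mpr (erf_strictMono.monotone hyx))]
    exact mul_sub_le_erf_sub_erf hy₁ hyx hx₂

lemma erfInv_erf (x : ℝ) : erfInv (erf x) = x :=
  Function.leftInverse_invFun erf_strictMono.injective x

lemma oneBitEstimator_spec (B : ℝ) :
    oneBitEstimator B ∈ Icc (-1) 1 ∧
      erf (oneBitEstimator B / √2) = max (-erf (1 / √2)) (min B (erf (1 / √2))) := by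
  have ha : 0 < erf (1 / √2) := erf_zero ▸ erf_strictMono (by positivity)
  unfold oneBitEstimator
  split_ifs with h₁ h₂
  · refine ⟨by norm_num, ?_⟩
    rw [min_eq_right h₁, max_eq_right (by linarith)]
  · refine ⟨by norm_num, ?_⟩
    rw [neg_div, erf_neg, min_eq_left (by linarith), max_eq_left h₂]
  · rw [not_le] at h₁ h₂
    obtain ⟨x, ⟨hx₁, hx₂⟩, rfl⟩ : ∃ x ∈ Icc (-(1 / √2)) (1 / √2), erf x = B :=
      intermediate_value_Icc (neg_le_self (by positivity)) continuous_erf.continuousOn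
        ⟨(erf_neg _).symm ▸ h₂.le, h₁.le⟩
    have hx : √2 * x ∈ Icc (-1) 1 := by
      have hs : √2 * (1 / √2) = 1 := by field_simp
      constructor <;> nlinarith [sqrt_nonneg 2]
    rw [erfInv_erf, mul_div_cancel_left₀ x (by positivity), min_eq_left h₁.le, max_eq_right h₂.le]
    exact ⟨hx, rfl⟩

lemma sq_oneBitEstimator_sub_le {θ : ℝ} (hθ : θ ∈ Icc (-1) 1) (B : ℝ) :
    (oneBitEstimator B - θ) ^ 2 ≤ π * exp 1 / 2 * (B - erf (θ / √2)) ^ 2 := by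
  obtain ⟨hest, herf⟩ := oneBitEstimator_spec B
  have hdiv {x : ℝ} (hx : x ∈ Icc (-1) 1) : |x / √2| ≤ 1 / √2 := by
    rw [abs_div, abs_of_pos (by positivity : (0 : ℝ) < √2)]
    gcongr
    exact abs_le.mpr hx
  have hθerf : erf (θ / √2) ∈ Icc (-erf (1 / √2)) (erf (1 / √2)) := by
    rw [← erf_neg]
    exact ⟨erf_strictMono.monotone (neg_le_of_abs_le (hdiv hθ)),
      erf_strictMono.monotone (le_of_abs_le (hdiv hθ))⟩
  have hlip := (mul_abs_sub_le_abs_erf_sub (hdiv hθ) (hdiv hest)).trans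
    (herf ▸ abs_max_min_sub_le hθerf B)
  have hc : π * exp 1 / 2 * (2 / √π * exp (-(1 / √2) ^ 2)) ^ 2 = 2 := by
    rw [mul_pow, div_pow, sq_sqrt pi_pos.le, div_pow, sq_sqrt zero_le_two, ← exp_nat_mul]
    field_simp
    rw [← exp_add]
    norm_num
  calc (oneBitEstimator B - θ) ^ 2
      = π * exp 1 / 2 *
          (2 / √π * exp (-(1 / √2) ^ 2) * |oneBitEstimator B / √2 - θ / √2|) ^ 2 := by
        rw [mul_pow, ← mul_assoc, hc, sq_abs, ← sub_div, div_pow, sq_sqrt zero_le_two]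
        ring
    _ ≤ π * exp 1 / 2 * |B - erf (θ / √2)| ^ 2 := by gcongr
    _ = π * exp 1 / 2 * (B - erf (θ / √2)) ^ 2 := by rw [sq_abs]

noncomputable def signBit (x : ℝ) : ℝ := if 0 ≤ x then 1 else -1

lemma measurable_signBit : Measurable signBit :=
  Measurable.ite measurableSet_Ici measurable_const measurable_const

lemma abs_signBit (x : ℝ) : |signBit x| = 1 := by
  unfold signBit
  split_ifs <;> simp

lemma memLp_signBit (ν : Measure ℝ) [IsFiniteMeasure ν] (p : ℝ≥0∞) : MemLp signBit p ν :=
  .of_bound measurable_signBit.aestronglyMeasurable 1 (ae_of_all _ fun x ↦ (abs_signBit x).le)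

lemma variance_signBit_le_one (ν : Measure ℝ) [IsProbabilityMeasure ν] : Var[signBit; ν] ≤ 1 :=
  calc Var[signBit; ν] ≤ ν[signBit ^ 2] :=
        variance_le_expectation_sq measurable_signBit.aestronglyMeasurable
    _ = 1 := by simp [← sq_abs (signBit _), abs_signBit]

lemma integral_mul_signBit_add_of_even {φ : ℝ → ℝ} (hφ : Integrable φ)
    (heven : ∀ x, φ (-x) = φ x) (θ : ℝ) :
    ∫ x, φ x * signBit (x + θ) = ∫ x in -θ..θ, φ x := by
  have hsplit (x : ℝ) :
      φ x * signBit (x + θ) = (Ici (-θ)).indicator φ x - (Iio (-θ)).indicator φ x := by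
    by_cases hx : -θ ≤ x
    · simp [signBit, hx, show 0 ≤ x + θ by linarith]
    · simp [signBit, hx, show ¬ 0 ≤ x + θ by linarith, not_le.mp hx]
  have hleft : ∫ x in Iio (-θ), φ x = ∫ x in Ioi θ, φ x := by
    rw [← integral_Iic_eq_integral_Iio, ← integral_comp_neg_Ioi]
    simp only [heven]
  simp_rw [hsplit]
  rw [integral_sub (hφ.indicator measurableSet_Ici) (hφ.indicator measurableSet_Iio),
    integral_indicator measurableSet_Ici, integral_indicator measurableSet_Iio, hleft,
    integral_Ici_eq_integral_Ioi,
    intervalIntegral.integral_Ioi_sub_Ioi' hφ.integrableOn hφ.integrableOn]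

lemma intervalIntegral_gaussianPDFReal_eq_erf (θ : ℝ) :
    ∫ x in -θ..θ, gaussianPDFReal 0 1 x = erf (θ / √2) := by
  have hpdf : ∀ x, gaussianPDFReal 0 1 x = (√(2 * π))⁻¹ * exp (-(x / √2) ^ 2) := fun x ↦ by
    rw [gaussianPDFReal, div_pow, sq_sqrt zero_le_two]
    simp [neg_div]
  have h := erf_sub_erf (-θ / √2) (θ / √2)
  rw [neg_div, erf_neg] at h
  simp_rw [hpdf]
  rw [intervalIntegral.integral_const_mul,
    intervalIntegral.integral_comp_div (fun t ↦ exp (-t ^ 2)) (by positivity), smul_eq_mul,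
    neg_div, sqrt_mul zero_le_two]
  have : √π ≠ 0 := by positivity
  field_simp at h ⊢
  linarith

lemma integral_signBit_gaussianReal (θ : ℝ) :
    ∫ x, signBit x ∂gaussianReal θ 1 = erf (θ / √2) := by
  have heven (x : ℝ) : gaussianPDFReal 0 1 (-x) = gaussianPDFReal 0 1 x := by
    simp [gaussianPDFReal]
  rw [integral_gaussianReal_eq_integral_smul one_ne_zero,
    ← integral_add_right_eq_self _ θ, ← intervalIntegral_gaussianPDFReal_eq_erf,
    ← integral_mul_signBit_add_of_even (integrable_gaussianPDFReal 0 1) heven]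
  simp [gaussianPDFReal_add]

section EmpiricalMean

variable {α : Type*} [MeasurableSpace α] {ν : Measure α} [IsProbabilityMeasure ν] {f : α → ℝ}
  {m : ℕ}

lemma memLp_empiricalMean {p : ℝ≥0∞} (hf : MemLp f p ν) :
    MemLp (fun ω : Fin m → α ↦ (1 / (m : ℝ)) * ∑ i, f (ω i)) p (Measure.pi (fun _ ↦ ν)) :=
  (memLp_finsetSum _ fun i _ ↦ hf.comp_measurePreserving (measurePreserving_eval _ i)).const_mul _

lemma integral_empiricalMean (hm : m ≠ 0) (hf : Integrable f ν) :
    ∫ ω : Fin m → α, (1 / (m : ℝ)) * ∑ i, f (ω i) ∂Measure.pi (fun _ ↦ ν) = ν[f] := by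
  rw [integral_const_mul, integral_finsetSum _ fun i _ ↦ integrable_comp_eval hf]
  simp [integral_comp_eval (μ := fun _ ↦ ν) hf.aestronglyMeasurable, hm]

lemma variance_empiricalMean (hf : MemLp f 2 ν) :
    Var[fun ω : Fin m → α ↦ (1 / (m : ℝ)) * ∑ i, f (ω i); Measure.pi (fun _ ↦ ν)] =
      Var[f; ν] / m := by
  rw [variance_const_mul, ← Finset.sum_fn, variance_sum_pi fun _ ↦ hf]
  simp only [Finset.sum_const, Finset.card_univ, Fintype.card_fin, nsmul_eq_mul]
  field_simp

lemma integral_sq_empiricalMean_sub (hm : m ≠ 0) (hf : MemLp f 2 ν) :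
    ∫ ω : Fin m → α, ((1 / (m : ℝ)) * ∑ i, f (ω i) - ν[f]) ^ 2 ∂Measure.pi (fun _ ↦ ν) =
      Var[f; ν] / m := by
  rw [← variance_empiricalMean hf, variance_eq_integral (memLp_empiricalMean hf).aemeasurable,
    integral_empiricalMean hm (hf.integrable one_le_two)]

end EmpiricalMean

/-- **Guarantee for the simultaneous one-bit protocol for Gaussian mean estimation.**
There is a constant `C > 0` such that for every `m ≥ 1` and every `θ ∈ [−1,1]`:
if `X_1,…,X_m` are i.i.d. `N(θ,1)`, `B_i = sign(X_i)`, `B = (1/m)Σ B_i`, and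
`θ̂ = oneBitEstimator B`, then `E[(θ̂ − θ)²] ≤ C/m`. -/
theorem oneBit_protocol_mean_estimation :
    ∃ C : ℝ, 0 < C ∧
      ∀ m : ℕ, 1 ≤ m → ∀ θ ∈ Set.Icc (-1 : ℝ) 1,
        (∫ ω : Fin m → ℝ,
            (oneBitEstimator ((1 / (m : ℝ)) * ∑ i, (if 0 ≤ ω i then (1 : ℝ) else -1)) - θ) ^ 2
            ∂(Measure.pi fun _ : Fin m => gaussianReal θ 1))
          ≤ C / m := by
  refine ⟨π * exp 1 / 2, by positivity, fun m hm θ hθ ↦ ?_⟩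
  set ν := gaussianReal θ 1
  have hB := memLp_empiricalMean (m := m) (memLp_signBit ν 2)
  change ∫ ω : Fin m → ℝ, (oneBitEstimator ((1 / (m : ℝ)) * ∑ i, signBit (ω i)) - θ) ^ 2
    ∂Measure.pi (fun _ ↦ ν) ≤ _
  calc _ ≤ ∫ ω : Fin m → ℝ,
            π * exp 1 / 2 * ((1 / (m : ℝ)) * ∑ i, signBit (ω i) - ν[signBit]) ^ 2
          ∂Measure.pi fun _ ↦ ν := by
        refine integral_mono_of_nonneg (ae_of_all _ fun _ ↦ sq_nonneg _)
          ((hB.sub (memLp_const _)).integrable_sq.const_mul _) (ae_of_all _ fun ω ↦ ?_)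
        rw [integral_signBit_gaussianReal]
        exact sq_oneBitEstimator_sub_le hθ _
    _ = π * exp 1 / 2 * (Var[signBit; ν] / m) := by
        rw [integral_const_mul, integral_sq_empiricalMean_sub (by omega) (memLp_signBit ν 2)]
    _ ≤ π * exp 1 / 2 * (1 / m) := by
        gcongr
        exact variance_signBit_le_one ν
    _ = π * exp 1 / 2 / m := by ring
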